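/- arXiv:2407.02202 — 2 statements merged into one kernel-verified Lean document; each statement's English description precedes it below -/
import Mathlib

section
/- Let A_L ∈ ℝ^{N×N} and K_μ a positive definite diagonal matrix satisfying A_L^T K_μ + K_μ A_L < 0 (negative definite). Let Π ∈ ℝ^{N×r} have full column rank and set Π† = (Π^T K_μ Π)^{-1} Π^T K_μ. Then the reduced matrix Â = Π† A_L Π is Hurwitz: every eigenvalue of Â has negative real part. In particular P_H := Π^T K_μ Π is positive definite and satisfies Â^T P_H + P_H Â < 0. -/
open Matrix

lemma quad_re {n : ℕ} (S : Matrix (Fin n) (Fin n) ℝ) (v : Fin n → ℂ) :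
    (star v ⬝ᵥ (S.map (fun t => (t : ℂ))) *ᵥ v).re =
      (fun i => (v i).re) ⬝ᵥ S *ᵥ (fun i => (v i).re) +
      (fun i => (v i).im) ⬝ᵥ S *ᵥ (fun i => (v i).im) := by
  simp only [dotProduct, mulVec, Matrix.map_apply, Pi.star_apply, Complex.re_sum,
    ← Finset.sum_add_distrib]
  refine Finset.sum_congr rfl fun i _ => ?_
  simp only [Complex.mul_re, Complex.re_sum, Complex.im_sum, Complex.mul_im,
    Complex.ofReal_re, Complex.ofReal_im, RCLike.star_def, Complex.conj_re, Complex.conj_im,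
    Finset.mul_sum, ← Finset.sum_sub_distrib, ← Finset.sum_add_distrib]
  refine Finset.sum_congr rfl fun j _ => ?_
  ring

lemma quad_im {n : ℕ} (S : Matrix (Fin n) (Fin n) ℝ) (hS : Sᵀ = S) (v : Fin n → ℂ) :
    (star v ⬝ᵥ (S.map (fun t => (t : ℂ))) *ᵥ v).im = 0 := by
  set Sc := S.map (fun t => (t : ℂ)) with hSc
  have hherm : Scᴴ = Sc := by
    ext i j
    simp only [conjTranspose_apply, hSc, Matrix.map_apply]
    rw [show S j i = Sᵀ i j from rfl, hS]
    simp
  have h : star (star v ⬝ᵥ Sc *ᵥ v) = star v ⬝ᵥ Sc *ᵥ v := by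
    rw [← star_dotProduct_star, star_star, star_mulVec, hherm, dotProduct_comm,
      dotProduct_mulVec, dotProduct_comm]
  have h2 := congrArg Complex.im h
  simp only [Complex.star_def, Complex.conj_im] at h2
  linarith

lemma eig_vec {n : ℕ} (A : Matrix (Fin n) (Fin n) ℂ) {z : ℂ} (hz : z ∈ spectrum ℂ A) :
    ∃ v : Fin n → ℂ, v ≠ 0 ∧ A *ᵥ v = z • v := by
  rw [spectrum.mem_iff] at hz
  have hdet : (z • (1 : Matrix (Fin n) (Fin n) ℂ) - A).det = 0 := by
    by_contra h
    exact hz (by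
      rw [Matrix.isUnit_iff_isUnit_det]
      · exact isUnit_iff_ne_zero.mpr (by rwa [Algebra.algebraMap_eq_smul_one] at *))
  obtain ⟨v, hv0, hv⟩ := (Matrix.exists_mulVec_eq_zero_iff).mpr hdet
  refine ⟨v, hv0, ?_⟩
  rw [sub_mulVec, smul_mulVec, one_mulVec, sub_eq_zero] at hv
  exact hv.symm

lemma inj_of_rank {N r : ℕ} (Pi : Matrix (Fin N) (Fin r) ℝ) (hrank : Pi.rank = r) :
    ∀ x : Fin r → ℝ, x ≠ 0 → Pi *ᵥ x ≠ 0 := by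
  have hker : LinearMap.ker Pi.mulVecLin = ⊥ := by
    have h2 := LinearMap.finrank_range_add_finrank_ker Pi.mulVecLin
    have h3 : Module.finrank ℝ (Fin r → ℝ) = r := Module.finrank_fin_fun ℝ
    have : Module.finrank ℝ (LinearMap.ker Pi.mulVecLin) = 0 := by
      have : Module.finrank ℝ (LinearMap.range Pi.mulVecLin) = r := hrank
      omega
    exact Submodule.finrank_eq_zero.mp this
  intro x hx hPx
  exact hx (Matrix.ker_mulVecLin_eq_bot_iff.mp hker x hPx)

theorem stmt_5 (N r : ℕ) (AL : Matrix (Fin N) (Fin N) ℝ)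
    (μ : Fin N → ℝ) (hμ : ∀ i, 0 < μ i)
    (K : Matrix (Fin N) (Fin N) ℝ) (hK : K = Matrix.diagonal μ)
    (hlyap : ∀ x : Fin N → ℝ, x ≠ 0 → x ⬝ᵥ (ALᵀ * K + K * AL) *ᵥ x < 0)
    (Pi : Matrix (Fin N) (Fin r) ℝ) (hrank : Pi.rank = r)
    (PiD : Matrix (Fin r) (Fin N) ℝ) (hPiD : PiD = (Piᵀ * K * Pi)⁻¹ * (Piᵀ * K))
    (Ahat : Matrix (Fin r) (Fin r) ℝ) (hAhat : Ahat = PiD * AL * Pi)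
    (PH : Matrix (Fin r) (Fin r) ℝ) (hPH : PH = Piᵀ * K * Pi) :
    PH.PosDef ∧
    (∀ x : Fin r → ℝ, x ≠ 0 → x ⬝ᵥ (Ahatᵀ * PH + PH * Ahat) *ᵥ x < 0) ∧
    (∀ z ∈ spectrum ℂ (Ahat.map (fun t => (t : ℂ))), z.re < 0) := by
  have hinj := inj_of_rank Pi hrank
  have hKsym : Kᵀ = K := by rw [hK, diagonal_transpose]
  have hKpd : K.PosDef := by
    rw [hK]; exact Matrix.posDef_diagonal_iff.mpr hμ
  have hKq : ∀ y : Fin N → ℝ, y ≠ 0 → 0 < y ⬝ᵥ K *ᵥ y := by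
    intro y hy
    simpa using hKpd.dotProduct_mulVec_pos hy
  -- quadratic form of sandwiched matrices
  have hsand : ∀ (S : Matrix (Fin N) (Fin N) ℝ) (x : Fin r → ℝ),
      x ⬝ᵥ (Piᵀ * S * Pi) *ᵥ x = (Pi *ᵥ x) ⬝ᵥ S *ᵥ (Pi *ᵥ x) := by
    intro S x
    rw [Matrix.mul_assoc, ← Matrix.mulVec_mulVec, dotProduct_mulVec, vecMul_transpose,
      ← Matrix.mulVec_mulVec, dotProduct_mulVec]
  have hPHsym : PHᵀ = PH := by
    rw [hPH]
    simp [Matrix.transpose_mul, hKsym, Matrix.mul_assoc]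
  have hPHpd : PH.PosDef := by
    refine Matrix.PosDef.of_dotProduct_mulVec_pos ?_ ?_
    · rw [Matrix.IsHermitian, conjTranspose_eq_transpose_of_trivial, hPHsym]
    · intro x hx
      have : x ⬝ᵥ PH *ᵥ x = (Pi *ᵥ x) ⬝ᵥ K *ᵥ (Pi *ᵥ x) := by rw [hPH]; exact hsand K x
      simpa [this] using hKq (Pi *ᵥ x) (hinj x hx)
  have hdet : IsUnit PH.det := isUnit_iff_ne_zero.mpr (ne_of_gt hPHpd.det_pos)
  -- key Lyapunov identity
  have h1 : PH * Ahat = Piᵀ * (K * AL) * Pi := by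
    rw [hAhat, hPiD, ← hPH]
    simp only [Matrix.mul_assoc]
    rw [Matrix.mul_nonsing_inv_cancel_left _ _ hdet]
  have h2 : Ahatᵀ * PH = Piᵀ * (ALᵀ * K) * Pi := by
    have := congrArg Matrix.transpose h1
    simp only [Matrix.transpose_mul, transpose_transpose, hPHsym, hKsym] at this
    rw [this]
    simp only [Matrix.mul_assoc]
  have hkey : Ahatᵀ * PH + PH * Ahat = Piᵀ * (ALᵀ * K + K * AL) * Pi := by
    rw [h1, h2, ← Matrix.add_mul, ← Matrix.mul_add]
  have part2 : ∀ x : Fin r → ℝ, x ≠ 0 → x ⬝ᵥ (Ahatᵀ * PH + PH * Ahat) *ᵥ x < 0 := by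
    intro x hx
    rw [hkey, hsand]
    exact hlyap (Pi *ᵥ x) (hinj x hx)
  refine ⟨hPHpd, part2, ?_⟩
  -- Hurwitz part
  intro z hz
  set M : Matrix (Fin r) (Fin r) ℝ := Ahatᵀ * PH + PH * Ahat with hM
  have hSsym : (ALᵀ * K + K * AL)ᵀ = ALᵀ * K + K * AL := by
    rw [Matrix.transpose_add, Matrix.transpose_mul, Matrix.transpose_mul, transpose_transpose,
      hKsym, add_comm]
  have hMsym : Mᵀ = M := by
    show (Ahatᵀ * PH + PH * Ahat)ᵀ = Ahatᵀ * PH + PH * Ahat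
    rw [Matrix.transpose_add, Matrix.transpose_mul, Matrix.transpose_mul, transpose_transpose,
      hPHsym, add_comm]
  have hMneg : ∀ x : Fin r → ℝ, x ≠ 0 → x ⬝ᵥ M *ᵥ x < 0 := part2
  obtain ⟨v, hv0, hv⟩ := eig_vec _ hz
  set a : Fin r → ℝ := fun i => (v i).re with ha
  set b : Fin r → ℝ := fun i => (v i).im with hb
  have hab : a ≠ 0 ∨ b ≠ 0 := by
    by_contra h
    push_neg at h
    apply hv0
    funext i
    have h1 := congrFun h.1 i
    have h2 := congrFun h.2 i
    exact Complex.ext (by simpa using h1) (by simpa using h2)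
  have hle : ∀ (X : Matrix (Fin r) (Fin r) ℝ), (∀ x, x ≠ 0 → x ⬝ᵥ X *ᵥ x < 0) →
      ∀ x, x ⬝ᵥ X *ᵥ x ≤ 0 := by
    intro X hX x
    rcases eq_or_ne x 0 with h | h
    · simp [h]
    · exact (hX x h).le
  have ht : a ⬝ᵥ M *ᵥ a + b ⬝ᵥ M *ᵥ b < 0 := by
    rcases hab with h | h
    · have := hMneg a h
      have := hle M hMneg b
      linarith
    · have := hMneg b h
      have := hle M hMneg a
      linarith
  have hPHq : ∀ x : Fin r → ℝ, 0 ≤ x ⬝ᵥ PH *ᵥ x := by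
    intro x
    rcases eq_or_ne x 0 with h | h
    · simp [h]
    · exact le_of_lt (by simpa using hPHpd.dotProduct_mulVec_pos h)
  have hs : 0 < a ⬝ᵥ PH *ᵥ a + b ⬝ᵥ PH *ᵥ b := by
    rcases hab with h | h
    · have h1 : 0 < a ⬝ᵥ PH *ᵥ a := by simpa using hPHpd.dotProduct_mulVec_pos h
      have := hPHq b
      linarith
    · have h1 : 0 < b ⬝ᵥ PH *ᵥ b := by simpa using hPHpd.dotProduct_mulVec_pos h
      have := hPHq a
      linarith
  set c : ℝ →+* ℂ := Complex.ofRealHom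
  have hq : star v ⬝ᵥ (M.map (fun t => (t : ℂ))) *ᵥ v =
      ((a ⬝ᵥ M *ᵥ a + b ⬝ᵥ M *ᵥ b : ℝ) : ℂ) := by
    apply Complex.ext
    · rw [Complex.ofReal_re]; exact quad_re M v
    · rw [Complex.ofReal_im]; exact quad_im M hMsym v
  have hp : star v ⬝ᵥ (PH.map (fun t => (t : ℂ))) *ᵥ v =
      ((a ⬝ᵥ PH *ᵥ a + b ⬝ᵥ PH *ᵥ b : ℝ) : ℂ) := by
    apply Complex.ext
    · rw [Complex.ofReal_re]; exact quad_re PH v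
    · rw [Complex.ofReal_im]; exact quad_im PH hPHsym v
  -- relate q to eigenvalue
  set Ac := Ahat.map (fun t => (t : ℂ)) with hAc
  set PHc := PH.map (fun t => (t : ℂ)) with hPHc
  have hmapmul : ∀ (X Y : Matrix (Fin r) (Fin r) ℝ),
      (X * Y).map (fun t => (t : ℂ)) = X.map (fun t => (t : ℂ)) * Y.map (fun t => (t : ℂ)) :=
    fun X Y => _root_.Matrix.map_mul (f := c)
  have hMc : M.map (fun t => (t : ℂ)) = Acᵀ * PHc + PHc * Ac := by
    rw [hM, Matrix.map_add _ (by intro a1 a2; push_cast; ring), hmapmul, hmapmul, Matrix.transpose_map]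
  have hstarv : Ac *ᵥ star v = star (Ac *ᵥ v) := by
    funext i
    simp [mulVec, dotProduct, hAc, Matrix.map_apply, Complex.star_def, map_sum, _root_.map_mul,
      Complex.conj_ofReal]
  have hq2 : star v ⬝ᵥ (M.map (fun t => (t : ℂ))) *ᵥ v =
      ((starRingEnd ℂ) z + z) * (star v ⬝ᵥ PHc *ᵥ v) := by
    rw [hMc, Matrix.add_mulVec, dotProduct_add, ← Matrix.mulVec_mulVec, ← Matrix.mulVec_mulVec]
    rw [hv, mulVec_smul, dotProduct_smul]
    rw [dotProduct_mulVec (star v) Acᵀ, vecMul_transpose, hstarv, hv]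
    rw [star_smul]
    rw [smul_dotProduct]
    simp only [smul_eq_mul, Complex.star_def]
    ring
  have heq : ((a ⬝ᵥ M *ᵥ a + b ⬝ᵥ M *ᵥ b : ℝ) : ℂ) =
      ((2 * z.re * (a ⬝ᵥ PH *ᵥ a + b ⬝ᵥ PH *ᵥ b) : ℝ) : ℂ) := by
    rw [← hq, hq2, hp]
    rw [add_comm ((starRingEnd ℂ) z) z, Complex.add_conj]
    push_cast
    ring
  have heqr : a ⬝ᵥ M *ᵥ a + b ⬝ᵥ M *ᵥ b =
      2 * z.re * (a ⬝ᵥ PH *ᵥ a + b ⬝ᵥ PH *ᵥ b) := Complex.ofReal_injective heq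
  nlinarith
end

section
/- For any complex s not an eigenvalue of A_L nor of Â_L = Π† A_L Π, the transfer-matrix identity g_{u_e}(s) − ĝ_{u_e}(s) = H(s) g_{u_e}(s) holds, where g_{u_e}(s) = (sI_N − A_L)^{-1} B, ĝ_{u_e}(s) = Π(sI_r − Â_L)^{-1} Π† B, and H(s) = [Π(sI_r − Â_L)^{-1} Π† A_L + I_N](I_N − Π Π†). -/
/-! With `G = (s - A)⁻¹` and `Ĝ = (s - D A P)⁻¹`, expanding `H G` and using `A G = s G - 1` and
`Ĝ (D A P) = s Ĝ - 1` makes every term carrying `s` cancel, leaving `G - P Ĝ D`. -/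

open Matrix

namespace Matrix

variable {R n r : Type*} [CommRing R] [Fintype n] [Fintype r] [DecidableEq n] [DecidableEq r]

theorem resolvent_sub_projected_resolvent (A G : Matrix n n R) (P : Matrix n r R)
    (D : Matrix r n R) (Ĝ : Matrix r r R) (s : R)
    (hG : (s • 1 - A) * G = 1) (hĜ : Ĝ * (s • 1 - D * A * P) = 1) :
    G - P * Ĝ * D = ((P * Ĝ * D * A + 1) * (1 - P * D)) * G := by
  have hAG : A * G = s • G - 1 := by
    rw [Matrix.sub_mul, Matrix.smul_mul, Matrix.one_mul] at hG
    rw [← hG]; abel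
  have hĜA : Ĝ * (D * A * P) = s • Ĝ - 1 := by
    rw [Matrix.mul_sub, Matrix.mul_smul, Matrix.mul_one] at hĜ
    rw [← hĜ]; abel
  calc G - P * Ĝ * D
      = P * Ĝ * D * (s • G - 1) - P * (s • Ĝ - 1) * (D * G) + G - P * (D * G) := by
        simp only [Matrix.mul_sub, Matrix.sub_mul, Matrix.mul_smul, Matrix.smul_mul, Matrix.mul_one,
          Matrix.mul_assoc]
        abel
    _ = P * Ĝ * D * (A * G) - P * (Ĝ * (D * A * P)) * (D * G) + G - P * (D * G) := by
        rw [hAG, hĜA]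
    _ = ((P * Ĝ * D * A + 1) * (1 - P * D)) * G := by
        simp only [Matrix.mul_sub, Matrix.sub_mul, Matrix.add_mul, Matrix.mul_one, Matrix.one_mul,
          Matrix.mul_assoc]
        abel

end Matrix

theorem stmt_10_general (N r p : ℕ)
    (AL : Matrix (Fin N) (Fin N) ℝ) (B : Matrix (Fin N) (Fin p) ℝ)
    (Pi : Matrix (Fin N) (Fin r) ℝ) (PiD : Matrix (Fin r) (Fin N) ℝ)
    (ALhat : Matrix (Fin r) (Fin r) ℝ) (hALhat : ALhat = PiD * AL * Pi)
    (s : ℂ)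
    (hs : IsUnit (s • (1 : Matrix (Fin N) (Fin N) ℂ) - AL.map (fun t => (t : ℂ))))
    (hshat : IsUnit (s • (1 : Matrix (Fin r) (Fin r) ℂ) - ALhat.map (fun t => (t : ℂ)))) :
    (s • (1 : Matrix (Fin N) (Fin N) ℂ) - AL.map (fun t => (t : ℂ)))⁻¹ * B.map (fun t => (t : ℂ))
      - Pi.map (fun t => (t : ℂ)) *
        (s • (1 : Matrix (Fin r) (Fin r) ℂ) - ALhat.map (fun t => (t : ℂ)))⁻¹ *
        PiD.map (fun t => (t : ℂ)) * B.map (fun t => (t : ℂ)) =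
    ((Pi.map (fun t => (t : ℂ)) *
        (s • (1 : Matrix (Fin r) (Fin r) ℂ) - ALhat.map (fun t => (t : ℂ)))⁻¹ *
        PiD.map (fun t => (t : ℂ)) * AL.map (fun t => (t : ℂ)) + 1) *
      (1 - Pi.map (fun t => (t : ℂ)) * PiD.map (fun t => (t : ℂ)))) *
      ((s • (1 : Matrix (Fin N) (Fin N) ℂ) - AL.map (fun t => (t : ℂ)))⁻¹ *
        B.map (fun t => (t : ℂ))) := by
  have hALhatℂ : ALhat.map (fun t => (t : ℂ)) =
      PiD.map (fun t => (t : ℂ)) * AL.map (fun t => (t : ℂ)) * Pi.map (fun t => (t : ℂ)) := by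
    rw [hALhat]
    exact (Matrix.map_mul (f := Complex.ofRealHom)).trans
      (congrArg (· * _) (Matrix.map_mul (f := Complex.ofRealHom)))
  have hG := mul_nonsing_inv _ ((isUnit_iff_isUnit_det _).mp hs)
  have hĜ := nonsing_inv_mul _ ((isUnit_iff_isUnit_det _).mp hshat)
  rw [hALhatℂ] at hĜ ⊢
  rw [← Matrix.mul_assoc _ _ (B.map _), ← resolvent_sub_projected_resolvent _ _ _ _ _ _ hG hĜ,
    Matrix.sub_mul]

theorem stmt_10 (N r p : ℕ)
    (AL : Matrix (Fin N) (Fin N) ℝ) (B : Matrix (Fin N) (Fin p) ℝ)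
    (Pi : Matrix (Fin N) (Fin r) ℝ) (PiD : Matrix (Fin r) (Fin N) ℝ)
    (hleft : PiD * Pi = 1)
    (ALhat : Matrix (Fin r) (Fin r) ℝ) (hALhat : ALhat = PiD * AL * Pi)
    (s : ℂ)
    (hs : IsUnit (s • (1 : Matrix (Fin N) (Fin N) ℂ) - AL.map (fun t => (t : ℂ))))
    (hshat : IsUnit (s • (1 : Matrix (Fin r) (Fin r) ℂ) - ALhat.map (fun t => (t : ℂ)))) :
    (s • (1 : Matrix (Fin N) (Fin N) ℂ) - AL.map (fun t => (t : ℂ)))⁻¹ * B.map (fun t => (t : ℂ))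
      - Pi.map (fun t => (t : ℂ)) *
        (s • (1 : Matrix (Fin r) (Fin r) ℂ) - ALhat.map (fun t => (t : ℂ)))⁻¹ *
        PiD.map (fun t => (t : ℂ)) * B.map (fun t => (t : ℂ)) =
    ((Pi.map (fun t => (t : ℂ)) *
        (s • (1 : Matrix (Fin r) (Fin r) ℂ) - ALhat.map (fun t => (t : ℂ)))⁻¹ *
        PiD.map (fun t => (t : ℂ)) * AL.map (fun t => (t : ℂ)) + 1) *
      (1 - Pi.map (fun t => (t : ℂ)) * PiD.map (fun t => (t : ℂ)))) *
      ((s • (1 : Matrix (Fin N) (Fin N) ℂ) - AL.map (fun t => (t : ℂ)))⁻¹ *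
        B.map (fun t => (t : ℂ))) :=
  stmt_10_general N r p AL B Pi PiD ALhat hALhat s hs hshat
end
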